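/- For the cyclic group C₂ of order 2, the semigroups φ(C₂) and N₂(C₂) coincide, and this semigroup is isomorphic to L₁⊔C₂. -/

import Mathlib

open Set

/-- An *upfamily* on `X`: a nonempty family of nonempty subsets of `X`
that is closed under taking supersets. -/
def IsUpfamily {X : Type*} (F : Set (Set X)) : Prop :=
  F.Nonempty ∧ (∀ A ∈ F, A.Nonempty) ∧ ∀ A ∈ F, ∀ B : Set X, A ⊆ B → B ∈ F

/-- The space `υ(X)` of upfamilies on `X`. -/
def Upfamily (X : Type*) : Type _ := {F : Set (Set X) // IsUpfamily F}

/-- The extension of the binary operation of `X` to families of subsets of `X`: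
`𝓐*𝓑 = ⟨⋃_{a ∈ A} a*B_a : A ∈ 𝓐, {B_a}_{a∈A} ⊆ 𝓑⟩`. -/
def upMul {X : Type*} [Mul X] (F G : Set (Set X)) : Set (Set X) :=
  {C | ∃ A ∈ F, ∃ B : X → Set X, (∀ a ∈ A, B a ∈ G) ∧ (⋃ a ∈ A, (fun y => a * y) '' B a) ⊆ C}

theorem IsUpfamily.upMul {X : Type*} [Mul X] {F G : Set (Set X)}
    (hF : IsUpfamily F) (hG : IsUpfamily G) : IsUpfamily (upMul F G) := by
  obtain ⟨⟨A0, hA0⟩, hFne, hFup⟩ := hF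
  obtain ⟨⟨B0, hB0⟩, hGne, hGup⟩ := hG
  refine ⟨⟨univ, A0, hA0, fun _ => B0, fun a _ => hB0, subset_univ _⟩, ?_, ?_⟩
  · rintro C ⟨A, hA, B, hB, hsub⟩
    obtain ⟨a, ha⟩ := hFne A hA
    obtain ⟨b, hb⟩ := hGne (B a) (hB a ha)
    exact ⟨a * b, hsub (mem_biUnion ha ⟨b, hb, rfl⟩)⟩
  · rintro C ⟨A, hA, B, hB, hsub⟩ D hCD
    exact ⟨A, hA, B, hB, hsub.trans hCD⟩

/-- `υ(X)` is a semigroup under the extended operation. -/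
instance {X : Type*} [Mul X] : Mul (Upfamily X) :=
  ⟨fun F G => ⟨upMul F.1 G.1, F.2.upMul G.2⟩⟩

/-- The embedding `X → υ(X)`, `x ↦ ⟨x⟩ = {A ⊆ X : x ∈ A}`. -/
def Upfamily.principal {X : Type*} (x : X) : Upfamily X :=
  ⟨{A | x ∈ A}, ⟨univ, mem_univ x⟩, fun A hA => ⟨x, hA⟩, fun _ hA _ hAB => hAB hA⟩

/-- An upfamily is linked if any two of its members intersect. -/
def Upfamily.Linked {X : Type*} (F : Upfamily X) : Prop :=
  ∀ A ∈ F.1, ∀ B ∈ F.1, (A ∩ B).Nonempty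

/-- Maximal linked upfamilies. -/
def Upfamily.IsMaxLinked {X : Type*} (F : Upfamily X) : Prop :=
  F.Linked ∧ ∀ G : Upfamily X, G.Linked → F.1 ⊆ G.1 → F = G

/-- Filters: upfamilies closed under binary intersections. -/
def Upfamily.IsFilter {X : Type*} (F : Upfamily X) : Prop :=
  ∀ A ∈ F.1, ∀ B ∈ F.1, A ∩ B ∈ F.1

/-- Ultrafilters: maximal filters. -/
def Upfamily.IsUltrafilter {X : Type*} (F : Upfamily X) : Prop :=
  F.IsFilter ∧ ∀ G : Upfamily X, G.IsFilter → F.1 ⊆ G.1 → F = G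

/-- The superextension `λ(X)` of maximal linked upfamilies. -/
def lambdaS (X : Type*) : Set (Upfamily X) := {F | F.IsMaxLinked}

/-- The semigroup `N₂(X)` of linked upfamilies. -/
def N2S (X : Type*) : Set (Upfamily X) := {F | F.Linked}

/-- The semigroup `φ(X)` of filters. -/
def phiS (X : Type*) : Set (Upfamily X) := {F | F.IsFilter}

/-- The Stone-Čech extension `β(X)` of ultrafilters. -/
def betaS (X : Type*) : Set (Upfamily X) := {F | F.IsUltrafilter}

section SemigroupProps

variable {M : Type*} [Mul M]

/-- A subset closed under multiplication (i.e. a subsemigroup). -/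
def mulClosed (S : Set M) : Prop := ∀ a ∈ S, ∀ b ∈ S, a * b ∈ S

/-- The operation is commutative on `S`. -/
def commOn (S : Set M) : Prop := ∀ a ∈ S, ∀ b ∈ S, a * b = b * a

/-- The idempotents of `S` commute. -/
def idemCommOn (S : Set M) : Prop :=
  ∀ a ∈ S, ∀ b ∈ S, a * a = a → b * b = b → a * b = b * a

/-- `S` is an inverse semigroup: every element has a unique inverse in `S`. -/
def inverseOn (S : Set M) : Prop :=
  ∀ a ∈ S, ∃! b, b ∈ S ∧ a * b * a = a ∧ b * a * b = b

/-- `H` is a subgroup of the ambient multiplicative structure: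
it is closed under multiplication and carries a group structure. -/
def IsSubgroupIn (H : Set M) : Prop :=
  (∀ a ∈ H, ∀ b ∈ H, a * b ∈ H) ∧
    ∃ e ∈ H, (∀ a ∈ H, e * a = a ∧ a * e = a) ∧ ∀ a ∈ H, ∃ b ∈ H, a * b = e ∧ b * a = e

/-- `S` is a Clifford semigroup: a union of groups. -/
def cliffordOn (S : Set M) : Prop := ∀ a ∈ S, ∃ H ⊆ S, IsSubgroupIn H ∧ a ∈ H

/-- `S` is regular in `T`: every `a ∈ S` satisfies `a ∈ a T a`. -/
def regularIn (S T : Set M) : Prop := ∀ a ∈ S, ∃ b ∈ T, a * b * a = a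

/-- `ppow a n = a^(n+1)`: positive powers in a semigroup. -/
def ppow (a : M) : ℕ → M
  | 0 => a
  | n + 1 => ppow a n * a

/-- `S` is sub-Clifford: `x^{n+1} = x^{m+1}` implies `x^n = x^m` for positive `n < m`. -/
def subCliffordOn (S : Set M) : Prop :=
  ∀ a ∈ S, ∀ n m : ℕ, n < m → ppow a (n + 1) = ppow a (m + 1) → ppow a n = ppow a m

end SemigroupProps

/-- The cyclic group `Cₙ` of order `n`. -/
abbrev Cgrp (n : ℕ) : Type := Multiplicative (ZMod n)

/-- The linear semilattice `Lₙ = {0,…,n-1}` with the operation of minimum. -/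
def L (n : ℕ) : Type := Fin n

instance {n : ℕ} : Mul (L n) :=
  ⟨fun a b => show Fin n from min (show Fin n from a) (show Fin n from b)⟩

/-- The disjoint ordered union `X ⊔ Y` of two semigroups, in which
`x * y = y * x = x` for `x ∈ X` and `y ∈ Y`. -/
abbrev OSum (A B : Type*) : Type _ := A ⊕ B

instance {A B : Type*} [Mul A] [Mul B] : Mul (OSum A B) :=
  ⟨fun x y =>
    match x, y with
    | Sum.inl a, Sum.inl a' => Sum.inl (a * a')
    | Sum.inl a, Sum.inr _ => Sum.inl a
    | Sum.inr _, Sum.inl a => Sum.inl a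
    | Sum.inr b, Sum.inr b' => Sum.inr (b * b')⟩

/-- `M` is isomorphic to the sub-semigroup `S` of `N`: there is an injective
operation-preserving map of `M` onto `S`. -/
def MulIsoOnto (M : Type*) [Mul M] {N : Type*} [Mul N] (S : Set N) : Prop :=
  ∃ f : M → N, Function.Injective f ∧ Set.range f = S ∧ ∀ x y : M, f (x * y) = f x * f y

/-!
On a set with at most two points every nonempty proper subset is a singleton. Hence a linked
upfamily either contains some `{x}`, and is then the principal ultrafilter at `x`, or consists of
`univ` alone. So `N₂(C₂) = φ(C₂)` consists of `{univ}` and the two principal ultrafilters; these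
multiply as in `C₂`, while `{univ}` absorbs everything because translations of a group are onto.
-/

theorem Set.exists_eq_singleton_of_ne_univ {X : Type*} [Fintype X] (hX : Fintype.card X ≤ 2)
    {A : Set X} (hA : A.Nonempty) (hA_ne : A ≠ univ) : ∃ x, A = {x} := by
  obtain ⟨a, ha⟩ := hA
  obtain ⟨b, hb⟩ := (ne_univ_iff_exists_notMem A).1 hA_ne
  refine ⟨a, eq_singleton_iff_unique_mem.2 ⟨ha, fun c hc => ?_⟩⟩
  by_contra hca
  exact hX.not_gt <| Fintype.two_lt_card_iff.2
    ⟨a, b, c, ne_of_mem_of_not_mem ha hb, Ne.symm hca, (ne_of_mem_of_not_mem hc hb).symm⟩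

namespace Upfamily

variable {X : Type*}

theorem ext_iff_mem {F G : Upfamily X} : F = G ↔ ∀ A, A ∈ F.1 ↔ A ∈ G.1 :=
  Subtype.ext_iff.trans Set.ext_iff

theorem mem_of_superset {F : Upfamily X} {A B : Set X} (hA : A ∈ F.1) (hAB : A ⊆ B) : B ∈ F.1 :=
  F.2.2.2 A hA B hAB

theorem univ_mem (F : Upfamily X) : univ ∈ F.1 :=
  let ⟨_, hA⟩ := F.2.1
  mem_of_superset hA (subset_univ _)

theorem mem_principal {x : X} {A : Set X} : A ∈ (principal x).1 ↔ x ∈ A :=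
  Iff.rfl

theorem principal_injective : Function.Injective (principal : X → Upfamily X) := by
  intro x y h
  have : ({x} : Set X) ∈ (principal y).1 := h ▸ mem_singleton x
  exact (mem_principal.1 this).symm

theorem isFilter_principal (x : X) : (principal x).IsFilter :=
  fun _ hA _ hB => ⟨hA, hB⟩

theorem IsFilter.linked {F : Upfamily X} (hF : F.IsFilter) : F.Linked :=
  fun A hA B hB => F.2.2.1 _ (hF A hA B hB)

theorem Linked.eq_principal {F : Upfamily X} (hF : F.Linked) {x : X} (hx : {x} ∈ F.1) :
    F = principal x := by
  refine ext_iff_mem.2 fun A =>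
    ⟨fun hA => ?_, fun hA => mem_of_superset hx (singleton_subset_iff.2 hA)⟩
  obtain ⟨y, hyA, rfl⟩ := hF A hA _ hx
  exact hyA

theorem principal_mul_principal [Mul X] (x y : X) :
    principal x * principal y = principal (x * y) := by
  refine ext_iff_mem.2 fun C => ⟨fun ⟨A, hA, B, hB, hC⟩ => hC (mem_biUnion hA ⟨y, hB x hA, rfl⟩),
    fun hC => ⟨{x}, rfl, fun _ => {y}, fun _ _ => rfl, ?_⟩⟩
  simpa using mem_principal.1 hC

section Top

variable [Nonempty X]

def top : Upfamily X :=
  ⟨{univ}, singleton_nonempty _, fun _ hA => hA ▸ univ_nonempty,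
    fun _ hA _ hAB => univ_subset_iff.1 (hA ▸ hAB)⟩

theorem mem_top {A : Set X} : A ∈ (top : Upfamily X).1 ↔ A = univ :=
  Iff.rfl

theorem isFilter_top : (top : Upfamily X).IsFilter := by
  rintro _ rfl _ rfl
  exact inter_self univ

theorem top_ne_principal [Nontrivial X] (x : X) : top ≠ principal x := by
  intro h
  obtain ⟨y, hy⟩ := exists_ne x
  have : ({x} : Set X) ∈ (top : Upfamily X).1 := h ▸ mem_singleton x
  exact hy (mem_top.1 this ▸ mem_univ y : y ∈ ({x} : Set X))

theorem Linked.eq_top_or_eq_principal [Fintype X] (hX : Fintype.card X ≤ 2) {F : Upfamily X}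
    (hF : F.Linked) : F = top ∨ ∃ x, F = principal x := by
  by_cases hsingleton : ∃ x, {x} ∈ F.1
  · obtain ⟨x, hx⟩ := hsingleton
    exact Or.inr ⟨x, hF.eq_principal hx⟩
  refine Or.inl <| ext_iff_mem.2 fun A => ⟨fun hA => ?_, fun hA => mem_top.1 hA ▸ F.univ_mem⟩
  by_contra hA_ne
  obtain ⟨x, rfl⟩ := exists_eq_singleton_of_ne_univ hX (F.2.2.1 A hA) hA_ne
  exact hsingleton ⟨x, hA⟩

end Top

section Group

variable [Group X]

theorem mul_top (F : Upfamily X) : F * top = top := by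
  refine ext_iff_mem.2 fun C => ⟨fun ⟨A, hA, B, hB, hC⟩ => ?_,
    fun hC => ⟨univ, F.univ_mem, fun _ => univ, fun _ _ => rfl,
      (mem_top.1 hC).symm ▸ subset_univ _⟩⟩
  obtain ⟨a, ha⟩ := F.2.2.1 A hA
  refine eq_univ_of_forall fun z => hC (mem_biUnion ha ⟨a⁻¹ * z, ?_, mul_inv_cancel_left a z⟩)
  exact (mem_top.1 (hB a ha)).symm ▸ mem_univ _

theorem top_mul_principal (x : X) : top * principal x = top := by
  refine ext_iff_mem.2 fun C => ⟨fun ⟨A, hA, B, hB, hC⟩ => ?_,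
    fun hC => ⟨univ, rfl, fun _ => univ, fun _ _ => mem_univ x,
      (mem_top.1 hC).symm ▸ subset_univ _⟩⟩
  obtain rfl : A = univ := hA
  exact eq_univ_of_forall fun z =>
    hC (mem_biUnion (mem_univ (z * x⁻¹)) ⟨x, hB _ (mem_univ _), inv_mul_cancel_right z x⟩)

end Group

end Upfamily

open Upfamily

theorem phiS_eq_N2S_of_card_le_two {X : Type*} [Fintype X] [Nonempty X]
    (hX : Fintype.card X ≤ 2) : phiS X = N2S X := by
  refine Set.ext fun F => ⟨IsFilter.linked, fun hF => ?_⟩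
  rcases hF.eq_top_or_eq_principal hX with rfl | ⟨x, rfl⟩
  exacts [isFilter_top, isFilter_principal x]

def osumToUpfamily (G : Type*) [Nonempty G] : OSum (L 1) G → Upfamily G :=
  Sum.elim (fun _ => top) principal

theorem mulIsoOnto_phiS_of_card_eq_two {G : Type*} [Group G] [Fintype G]
    (hG : Fintype.card G = 2) : MulIsoOnto (OSum (L 1) G) (phiS G) := by
  have : Nontrivial G := Fintype.one_lt_card_iff_nontrivial.1 (by omega)
  refine ⟨osumToUpfamily G, ?injective, ?range, ?map_mul⟩
  case injective =>
    rintro (a | a) (b | b) h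
    · exact congrArg Sum.inl (Subsingleton.elim (α := Fin 1) a b)
    · exact absurd h (top_ne_principal b)
    · exact absurd h.symm (top_ne_principal a)
    · exact congrArg Sum.inr (principal_injective h)
  case range =>
    refine Set.ext fun F => ⟨?_, fun hF => ?_⟩
    · rintro ⟨a | a, rfl⟩
      exacts [isFilter_top, isFilter_principal a]
    · rcases hF.linked.eq_top_or_eq_principal hG.le with rfl | ⟨x, rfl⟩
      exacts [⟨Sum.inl (0 : Fin 1), rfl⟩, ⟨Sum.inr x, rfl⟩]
  case map_mul =>
    rintro (a | a) (b | b)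
    exacts [(mul_top top).symm, (top_mul_principal b).symm, (mul_top (principal a)).symm,
      (principal_mul_principal a b).symm]

/-- Proposition 4.7(1): `φ(C₂) = N₂(C₂)`, and this semigroup is isomorphic
to `L₁ ⊔ C₂`. -/
theorem filters_of_C2 :
    phiS (Cgrp 2) = N2S (Cgrp 2) ∧
      MulIsoOnto (OSum (L 1) (Cgrp 2)) (phiS (Cgrp 2)) :=
  have hcard : Fintype.card (Cgrp 2) = 2 := ZMod.card 2
  ⟨phiS_eq_N2S_of_card_le_two hcard.le, mulIsoOnto_phiS_of_card_eq_two hcard⟩
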